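/- arXiv:0710.4031 — 3 statements merged into one kernel-verified Lean document; each statement's English description precedes it below -/
import Mathlib

section
/- Let b ≥ 2 and m ≥ 1 be integers with m ∤ (b − 1) and b > m. Then the critical exponent of t_{b,m} is at most 2b/m: for every ℓ ≥ 1 and every window [i, i+L) on which t has period ℓ (i.e., t(i+j) = t(i+j+ℓ) for all 0 ≤ j < L − ℓ), one has m·L ≤ 2b·ℓ. -/
/-- The generalized Thue–Morse word: `t b m n = s_b(n) mod m`, valued in `ZMod m`. -/
def genTM (b m n : ℕ) : ZMod m := ((Nat.digits b n).sum : ZMod m)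

lemma genTM_mul_add (b m : ℕ) (hb : 2 ≤ b) (q r : ℕ) (hr : r < b) :
    genTM b m (b * q + r) = genTM b m q + (r : ZMod m) := by
  unfold genTM
  rcases Nat.eq_zero_or_pos (b * q + r) with h | h
  · have hq : q = 0 := by
      rcases Nat.mul_eq_zero.mp (Nat.eq_zero_of_add_eq_zero_right h) with h' | h' <;> omega
    have hr0 : r = 0 := by omega
    subst hq; subst hr0; simp
  · rw [Nat.digits_def' (by omega : 1 < b) h]
    have h1 : (b * q + r) % b = r := by rw [Nat.mul_add_mod]; exact Nat.mod_eq_of_lt hr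
    have h2 : (b * q + r) / b = q := by
      rw [Nat.mul_add_div (by omega)]
      simp [Nat.div_eq_of_lt hr]
    rw [h1, h2, List.sum_cons]
    push_cast
    ring

lemma genTM_succ (b m : ℕ) (hb : 2 ≤ b) (n : ℕ) (h : ¬ b ∣ (n+1)) :
    genTM b m (n+1) = genTM b m n + 1 := by
  obtain ⟨Q, R, hR1, hRb, hn⟩ : ∃ Q R, 1 ≤ R ∧ R < b ∧ n + 1 = b * Q + R := by
    have e1 := Nat.div_add_mod (n+1) b
    have hr : 1 ≤ (n+1) % b := by
      rcases Nat.eq_zero_or_pos ((n+1) % b) with h0 | h0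
      · exact absurd (Nat.dvd_of_mod_eq_zero h0) h
      · exact h0
    exact ⟨(n+1)/b, (n+1)%b, hr, Nat.mod_lt _ (by omega), by omega⟩
  rw [hn, show n = b * Q + (R - 1) by omega,
    genTM_mul_add b m hb Q R hRb, genTM_mul_add b m hb Q (R-1) (by omega),
    Nat.cast_sub hR1]
  push_cast
  ring

/-- if `m ∤ (b-1)` and `b > m`, then the critical exponent of `t_{b,m}`
is at most `2b/m`: every window `[i, i+L)` with period `ℓ` satisfies `m·L ≤ 2b·ℓ`. -/
theorem genTM_critical_exponent_le (b m : ℕ) (hb : 2 ≤ b) (hm : 1 ≤ m)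
    (hap : ¬ m ∣ (b - 1)) (hbm : b > m) :
    ∀ i ℓ L : ℕ, 1 ≤ ℓ → ℓ ≤ L →
      (∀ j : ℕ, j < L - ℓ → genTM b m (i + j) = genTM b m (i + j + ℓ)) →
      m * L ≤ 2 * b * ℓ := by
  intro i ℓ L
  induction ℓ using Nat.strong_induction_on generalizing i L with
  | _ ℓ IH =>
  intro hℓ hℓL hwin
  by_cases hL2 : L ≤ 2 * ℓ
  · calc m * L ≤ m * (2 * ℓ) := Nat.mul_le_mul_left _ hL2
      _ ≤ b * (2 * ℓ) := Nat.mul_le_mul_right _ (le_of_lt hbm)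
      _ = 2 * b * ℓ := by ring
  push_neg at hL2
  by_cases hdvd : b ∣ ℓ
  · -- reduce to period ℓ₀ = ℓ / b
    obtain ⟨ℓ₀, rfl⟩ := hdvd
    have hℓ₀ : 1 ≤ ℓ₀ := by
      rcases Nat.eq_zero_or_pos ℓ₀ with h | h
      · subst h; simp at hℓ
      · exact h
    obtain ⟨M, rfl⟩ : ∃ M, L = b * ℓ₀ + M := ⟨L - b * ℓ₀, by omega⟩
    have hM1 : 1 ≤ M := by omega
    obtain ⟨qi, ri, hi, him⟩ : ∃ q r, i = b * q + r ∧ r < b :=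
      ⟨i / b, i % b, by have := Nat.div_add_mod i b; omega, Nat.mod_lt _ (by omega)⟩
    obtain ⟨D, R, hDR, hRb⟩ : ∃ D R, M - 1 = b * D + R ∧ R < b :=
      ⟨(M-1)/b, (M-1)%b, by have := Nat.div_add_mod (M-1) b; omega, Nat.mod_lt _ (by omega)⟩
    have hwin' : ∀ k, k ≤ D → genTM b m (qi + k) = genTM b m (qi + k + ℓ₀) := by
      intro k hk
      have h2 : b * k ≤ b * D := Nat.mul_le_mul_left _ hk
      have hw := hwin (b*k) (by omega)
      rw [show i + b*k + b*ℓ₀ = b*(qi+k+ℓ₀) + ri by rw [Nat.mul_add, Nat.mul_add]; omega,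
          show i + b*k = b*(qi+k) + ri by rw [Nat.mul_add]; omega,
          genTM_mul_add b m hb (qi+k) ri him, genTM_mul_add b m hb (qi+k+ℓ₀) ri him] at hw
      exact add_right_cancel hw
    have hIH := IH ℓ₀ (by nlinarith) qi (D + 1 + ℓ₀) hℓ₀ (Nat.le_add_left ℓ₀ (D+1))
      (fun j hj => hwin' j (by omega))
    have h4 : M ≤ b * (D + 1) := by rw [Nat.mul_add, Nat.mul_one]; omega
    calc m * (b*ℓ₀ + M) ≤ m * (b*ℓ₀ + b*(D + 1)) := Nat.mul_le_mul_left _ (by omega)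
      _ = b * (m * (D + 1 + ℓ₀)) := by ring
      _ ≤ b * (2 * b * ℓ₀) := Nat.mul_le_mul_left _ hIH
      _ = 2 * b * (b * ℓ₀) := by ring
  · by_cases hsm : ℓ < m
    · -- small period case: contradiction
      exfalso
      have hbℓ : ℓ < b := by omega
      obtain ⟨qi, ri, hi, him⟩ : ∃ q r, i = b * q + r ∧ r < b :=
        ⟨i / b, i % b, by have := Nat.div_add_mod i b; omega, Nat.mod_lt _ (by omega)⟩
      obtain ⟨k, q', r', hkℓ, he, hr'⟩ :
          ∃ k q' r', k ≤ ℓ ∧ i + k = b*q' + r' ∧ r' + ℓ < b := by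
        rcases lt_or_ge (ri + ℓ) b with hcase | hcase
        · exact ⟨0, qi, ri, by omega, by omega, by omega⟩
        · refine ⟨b - ri, qi + 1, 0, by omega, ?_, by omega⟩
          rw [Nat.mul_add, Nat.mul_one]; omega
      have hw := hwin k (by omega)
      rw [he, show b*q' + r' + ℓ = b*q' + (r' + ℓ) by omega,
        genTM_mul_add b m hb q' r' (by omega), genTM_mul_add b m hb q' (r'+ℓ) hr'] at hw
      have hc : ((ℓ : ℕ) : ZMod m) = 0 := by
        have h := add_left_cancel hw
        push_cast at h
        linear_combination -h
      have : m ∣ ℓ := (ZMod.natCast_eq_zero_iff ℓ m).mp hc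
      have := Nat.le_of_dvd (by omega) this
      omega
    · -- ℓ ≥ m
      push_neg at hsm
      suffices hL2b : L ≤ 2 * b by
        calc m * L ≤ m * (2 * b) := Nat.mul_le_mul_left _ hL2b
          _ ≤ ℓ * (2 * b) := Nat.mul_le_mul_right _ hsm
          _ = 2 * b * ℓ := by ring
      by_contra hc
      push_neg at hc
      have good : ∀ p : ℕ, 1 ≤ p → i + 1 ≤ b * p → b * p + 1 ≤ i + L →
          genTM b m (b * p) = genTM b m (b * p - 1) + 1 := by
        intro p hp h1 h2
        have hbw : b ∣ b * p := ⟨p, rfl⟩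
        set w := b * p with hw
        rcases le_or_gt (w + ℓ + 1) (i + L) with hcase | hcase
        · have hj1 := hwin (w - 1 - i) (by omega)
          have hj2 := hwin (w - i) (by omega)
          rw [show i + (w - 1 - i) = w - 1 by omega] at hj1
          rw [show i + (w - i) = w by omega] at hj2
          have hnd : ¬ b ∣ (w - 1 + ℓ + 1) := by
            rw [show w - 1 + ℓ + 1 = w + ℓ by omega]
            intro hd
            exact hdvd ((Nat.dvd_add_right hbw).mp hd)
          have hs := genTM_succ b m hb (w - 1 + ℓ) hnd
          rw [show w + ℓ = w - 1 + ℓ + 1 by omega] at hj2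
          rw [hj2, hs, ← hj1]
        · have hj1 := hwin (w - ℓ - 1 - i) (by omega)
          have hj2 := hwin (w - ℓ - i) (by omega)
          rw [show i + (w - ℓ - 1 - i) = w - ℓ - 1 by omega,
            show w - ℓ - 1 + ℓ = w - 1 by omega] at hj1
          rw [show i + (w - ℓ - i) = w - ℓ by omega,
            show w - ℓ + ℓ = w by omega] at hj2
          have hnd : ¬ b ∣ (w - ℓ - 1 + 1) := by
            rw [show w - ℓ - 1 + 1 = w - ℓ by omega]
            intro hd
            exact hdvd (by
              have := Nat.dvd_sub hbw hd
              rwa [show w - (w - ℓ) = ℓ by omega] at this)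
          have hs := genTM_succ b m hb (w - ℓ - 1) hnd
          rw [show w - ℓ - 1 + 1 = w - ℓ by omega] at hs
          rw [← hj2, hs, hj1]
      -- choose a multiple of b inside the window, with quotient not divisible by b
      obtain ⟨qi, ri, hi, him⟩ : ∃ q r, i = b * q + r ∧ r < b :=
        ⟨i / b, i % b, by have := Nat.div_add_mod i b; omega, Nat.mod_lt _ (by omega)⟩
      obtain ⟨Q, hQ0, hQ1, hQ2⟩ : ∃ Q, 1 ≤ Q ∧ i + 1 ≤ b * Q ∧ b * Q ≤ i + b := by
        refine ⟨qi + 1, by omega, ?_, ?_⟩ <;> rw [Nat.mul_add, Nat.mul_one] <;> omega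
      obtain ⟨p, hp1, hbp, hpge, hple⟩ :
          ∃ p, 1 ≤ p ∧ ¬ b ∣ p ∧ b * Q ≤ b * p ∧ b * p ≤ b * Q + b := by
        by_cases hd : b ∣ Q
        · refine ⟨Q + 1, by omega, ?_, Nat.mul_le_mul_left _ (by omega),
            le_of_eq (by rw [Nat.mul_add, Nat.mul_one])⟩
          intro hd2
          have hdd := Nat.dvd_sub hd2 hd
          rw [show Q + 1 - Q = 1 by omega] at hdd
          have := Nat.le_of_dvd one_pos hdd
          omega
        · exact ⟨Q, hQ0, hd, le_rfl, by omega⟩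
      have hg := good p hp1 (by omega) (by omega)
      -- unfold the goodness equality into digit sums
      obtain ⟨p', rfl⟩ : ∃ p', p = p' + 1 := ⟨p - 1, by omega⟩
      obtain ⟨PQ, R₀, hR₀1, hR₀b, hpeq⟩ : ∃ Q R, 1 ≤ R ∧ R < b ∧ p' + 1 = b * Q + R := by
        have e1 := Nat.div_add_mod (p'+1) b
        have hr : 1 ≤ (p'+1) % b := by
          rcases Nat.eq_zero_or_pos ((p'+1) % b) with h0 | h0
          · exact absurd (Nat.dvd_of_mod_eq_zero h0) hbp
          · exact h0
        exact ⟨(p'+1)/b, (p'+1)%b, hr, Nat.mod_lt _ (by omega), by omega⟩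
      have e0 : genTM b m (b * (p'+1)) = genTM b m (p'+1) + ((0:ℕ) : ZMod m) := by
        rw [show b * (p'+1) = b * (p'+1) + 0 by omega]
        exact genTM_mul_add b m hb (p'+1) 0 (by omega)
      have e1 : genTM b m (b * (p'+1) - 1) = genTM b m p' + ((b-1 : ℕ) : ZMod m) := by
        rw [show b * (p'+1) - 1 = b * p' + (b-1) by rw [Nat.mul_add, Nat.mul_one]; omega]
        exact genTM_mul_add b m hb p' (b-1) (by omega)
      have e2 : genTM b m (p'+1) = genTM b m PQ + ((R₀ : ℕ) : ZMod m) := by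
        nth_rewrite 1 [hpeq]
        exact genTM_mul_add b m hb _ _ hR₀b
      have e3 : genTM b m p' = genTM b m PQ + ((R₀ - 1 : ℕ) : ZMod m) := by
        nth_rewrite 1 [show p' = b * PQ + (R₀ - 1) by omega]
        exact genTM_mul_add b m hb _ _ (by omega)
      rw [e0, e1, e2, e3] at hg
      have hcast : ((R₀ - 1 : ℕ) : ZMod m) = (R₀ : ZMod m) - 1 := by
        rw [Nat.cast_sub hR₀1, Nat.cast_one]
      have hbz : ((b - 1 : ℕ) : ZMod m) = 0 := by
        push_cast at hg
        linear_combination -hcast - hg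
      exact hap ((ZMod.natCast_eq_zero_iff (b-1) m).mp hbz)
end

section
/- Let b ≥ 2 and m ≥ 1 be integers. For all i ≥ 0, ℓ ≥ 1 and L ≥ ℓ: t_{b,m} has period ℓ on the window [i, i+L) if and only if t_{b,m} has period b·ℓ on the window [b·i, b·i + b·L). (This expresses that applying the b-uniform morphism μ, under which t is a fixed point, preserves and reflects powers: w^e occurs at position i if and only if μ(w)^e occurs at position b·i.) -/
lemma genTM_step (b m : ℕ) (hb : 2 ≤ b) (n r : ℕ) (hr : r < b) :
    genTM b m (b * n + r) = genTM b m n + (r : ZMod m) := by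
  unfold genTM
  rcases Nat.eq_zero_or_pos n with h0 | hn
  · subst h0
    simp only [Nat.mul_zero, Nat.zero_add, Nat.digits_zero, List.sum_nil,
      Nat.cast_zero, zero_add]
    rcases Nat.eq_zero_or_pos r with h0 | hr0
    · subst h0; simp
    · rw [Nat.digits_def' (by omega : 1 < b) hr0, Nat.mod_eq_of_lt hr,
        Nat.div_eq_of_lt hr]
      simp
  · have hpos : 0 < b * n + r := by positivity
    rw [Nat.digits_def' (by omega : 1 < b) hpos]
    have h1 : (b * n + r) % b = r := by
      rw [Nat.add_comm, Nat.add_mul_mod_self_left, Nat.mod_eq_of_lt hr]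
    have h2 : (b * n + r) / b = n := by
      rw [Nat.add_comm, Nat.add_mul_div_left _ _ (by omega : 0 < b),
        Nat.div_eq_of_lt hr, Nat.zero_add]
    rw [h1, h2]
    push_cast
    simp [add_comm]

/-- the `b`-uniform morphism fixing `t` preserves and reflects powers:
`t` has period `ℓ` on `[i, i+L)` iff `t` has period `b·ℓ` on `[b·i, b·i + b·L)`. -/
theorem genTM_morphism_power (b m : ℕ) (hb : 2 ≤ b) (hm : 1 ≤ m) :
    ∀ i ℓ L : ℕ, 1 ≤ ℓ → ℓ ≤ L →
      ((∀ j : ℕ, j < L - ℓ → genTM b m (i + j) = genTM b m (i + j + ℓ)) ↔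
       (∀ j : ℕ, j < b * L - b * ℓ →
          genTM b m (b * i + j) = genTM b m (b * i + j + b * ℓ))) := by
  intro i ℓ L hℓ hL
  constructor
  · intro h j hj
    have hjb : j = b * (j / b) + j % b := (Nat.div_add_mod j b).symm
    set q := j / b with hq
    set r := j % b with hr
    have hrb : r < b := Nat.mod_lt _ (by omega)
    have hdist : b * (L - ℓ) + b * ℓ = b * L := by
      rw [← Nat.mul_add, Nat.sub_add_cancel hL]
    have hqlt : q < L - ℓ := by
      refine Nat.div_lt_of_lt_mul ?_
      have hcomm : (L - ℓ) * b = b * (L - ℓ) := Nat.mul_comm _ _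
      omega
    have e1 : b * i + j = b * (i + q) + r := by rw [hjb]; ring
    have e2 : b * i + j + b * ℓ = b * (i + q + ℓ) + r := by rw [hjb]; ring
    rw [e2, e1, genTM_step b m hb _ _ hrb, genTM_step b m hb _ _ hrb,
      h q hqlt]
  · intro h j hj
    have hdist : b * (L - ℓ) + b * ℓ = b * L := by
      rw [← Nat.mul_add, Nat.sub_add_cancel hL]
    have hjlt : b * j < b * L - b * ℓ := by
      have := (Nat.mul_lt_mul_left (show 0 < b by omega)).mpr hj
      omega
    have := h (b * j) hjlt
    have e1 : b * i + b * j = b * (i + j) + 0 := by ring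
    have e2 : b * i + b * j + b * ℓ = b * (i + j + ℓ) + 0 := by ring
    rw [e2, e1, genTM_step b m hb _ _ (by omega), genTM_step b m hb _ _ (by omega)] at this
    simpa using this
end

section
/- Let b and m be integers with 2 ≤ b ≤ m. Suppose ℓ ≥ 1 with b ∤ ℓ, and suppose t has period ℓ on the window [i, i+2ℓ), i.e., t(i+j) = t(i+j+ℓ) for all 0 ≤ j < ℓ (an occurrence of a square w² with |w| = ℓ). Then b divides i + ℓ; that is, the second half w^{(2)} of the square occurs at the beginning of a block. -/
/-! Auxiliary: the `b`-adic valuation. -/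

def vvTM (b x : ℕ) : ℕ :=
  if h : 2 ≤ b ∧ b ∣ x ∧ 0 < x then vvTM b (x / b) + 1 else 0
termination_by x
decreasing_by exact Nat.div_lt_self h.2.2 (by omega)

lemma vvTM_of_not_dvd {b x : ℕ} (h : ¬ b ∣ x) : vvTM b x = 0 := by
  rw [vvTM, dif_neg]; tauto

lemma vvTM_mul {b : ℕ} (hb : 2 ≤ b) {k : ℕ} (hk : 0 < k) :
    vvTM b (b * k) = vvTM b k + 1 := by
  rw [vvTM, dif_pos ⟨hb, Dvd.intro k rfl, by positivity⟩,
    Nat.mul_div_cancel_left _ (by omega : 0 < b)]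

lemma one_le_vvTM {b x : ℕ} (hb : 2 ≤ b) (hd : b ∣ x) (hx : 0 < x) : 1 ≤ vvTM b x := by
  rw [vvTM, dif_pos ⟨hb, hd, hx⟩]; omega

lemma sq_dvd_of_two_le_vvTM {b x : ℕ} (h2 : 2 ≤ vvTM b x) : b * b ∣ x := by
  rw [vvTM] at h2
  split at h2
  · rename_i h
    obtain ⟨hb, hd, hx⟩ := h
    have h1 : 1 ≤ vvTM b (x / b) := by omega
    have hdb : b ∣ x / b := by
      by_contra hc
      rw [vvTM_of_not_dvd hc] at h1; omega
    obtain ⟨c, hc⟩ := hdb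
    refine ⟨c, ?_⟩
    have hx' : b * (x / b) = x := Nat.mul_div_cancel' hd
    rw [hc] at hx'
    rw [← hx']; ring
  · omega

/-! Digit sum facts. -/

lemma sum_digits_mul {b : ℕ} (hb : 2 ≤ b) {k : ℕ} (hk : 0 < k) :
    (Nat.digits b (b * k)).sum = (Nat.digits b k).sum := by
  rw [Nat.digits_def' (by omega : 1 < b) (by positivity), Nat.mul_mod_right,
    Nat.mul_div_cancel_left _ (by omega : 0 < b)]
  simp

lemma sum_digits_pred_mul {b : ℕ} (hb : 2 ≤ b) {k : ℕ} (hk : 0 < k) :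
    (Nat.digits b (b * k - 1)).sum = (Nat.digits b (k - 1)).sum + (b - 1) := by
  have h1 : b * k - 1 = b * (k - 1) + (b - 1) := by
    have h2 : b * k = b * (k - 1) + b := by
      have h3 : k = (k - 1) + 1 := by omega
      calc b * k = b * ((k - 1) + 1) := by rw [← h3]
        _ = b * (k - 1) + b := by ring
    omega
  rw [h1, Nat.digits_def' (by omega : 1 < b) (by omega), Nat.mul_add_mod,
    Nat.mul_add_div (by omega : 0 < b), Nat.mod_eq_of_lt (by omega : b - 1 < b),
    Nat.div_eq_of_lt (by omega : b - 1 < b), Nat.add_zero, List.sum_cons]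
  omega

lemma sum_digits_succ_not_dvd {b : ℕ} (hb : 2 ≤ b) {n : ℕ} (h : ¬ b ∣ (n + 1)) :
    (Nat.digits b (n + 1)).sum = (Nat.digits b n).sum + 1 := by
  rcases Nat.eq_zero_or_pos n with hn | hn
  · subst hn
    rw [Nat.digits_def' (by omega : 1 < b) (by omega : (0:ℕ) < 0 + 1)]
    simp [Nat.mod_eq_of_lt (by omega : 1 < b), Nat.div_eq_of_lt (by omega : 1 < b)]
  · have hdiv : (n + 1) / b = n / b := by
      rw [Nat.succ_div, if_neg h]; simp
    have h1 := Nat.div_add_mod n b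
    have h2 := Nat.div_add_mod (n + 1) b
    rw [hdiv] at h2
    have hlt : (n + 1) % b < b := Nat.mod_lt _ (by omega)
    rw [Nat.digits_def' (by omega : 1 < b) (by omega : 0 < n + 1),
      Nat.digits_def' (by omega : 1 < b) hn, hdiv, List.sum_cons, List.sum_cons]
    obtain ⟨A, hA⟩ : ∃ A, b * (n / b) = A := ⟨_, rfl⟩
    obtain ⟨r1, hr1⟩ : ∃ r, n % b = r := ⟨_, rfl⟩
    obtain ⟨r2, hr2⟩ : ∃ r, (n + 1) % b = r := ⟨_, rfl⟩
    obtain ⟨Ssum, hS⟩ : ∃ S, (Nat.digits b (n / b)).sum = S := ⟨_, rfl⟩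
    rw [hA, hr1] at h1
    rw [hA, hr2] at h2
    rw [hr2] at hlt
    rw [hr1, hr2, hS]
    omega

/-- The key one-step identity: `s(n+1) + (b-1)·v(n+1) = s(n) + 1`. -/
lemma sum_digits_succ {b : ℕ} (hb : 2 ≤ b) (n : ℕ) :
    (Nat.digits b (n + 1)).sum + (b - 1) * vvTM b (n + 1) = (Nat.digits b n).sum + 1 := by
  induction n using Nat.strong_induction_on with
  | _ n ih =>
    by_cases h : b ∣ (n + 1)
    · obtain ⟨k, hk⟩ := h
      have hk1 : 1 ≤ k := by
        rcases Nat.eq_zero_or_pos k with h0 | h0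
        · rw [h0, Nat.mul_zero] at hk; omega
        · exact h0
      have hkn : k - 1 < n := by
        have h4 : 2 * k ≤ b * k := Nat.mul_le_mul_right k hb
        omega
      have ihk := ih (k - 1) hkn
      rw [show k - 1 + 1 = k from by omega] at ihk
      rw [hk, sum_digits_mul hb hk1, vvTM_mul hb hk1,
        show n = b * k - 1 from by omega, sum_digits_pred_mul hb hk1,
        Nat.mul_add, Nat.mul_one]
      obtain ⟨P, hP⟩ : ∃ P, (b - 1) * vvTM b k = P := ⟨_, rfl⟩
      rw [hP] at ihk ⊢
      omega
    · rw [vvTM_of_not_dvd h, sum_digits_succ_not_dvd hb h]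
      omega

/-- Telescoped identity. -/
lemma sum_digits_tel {b : ℕ} (hb : 2 ≤ b) (n : ℕ) : ∀ L : ℕ,
    (Nat.digits b (n + L)).sum + ∑ j ∈ Finset.range L, (b - 1) * vvTM b (n + j + 1)
      = (Nat.digits b n).sum + L := by
  intro L
  induction L with
  | zero => simp
  | succ L ih =>
    rw [Finset.sum_range_succ, show n + (L + 1) = (n + L) + 1 from by ring]
    have h := sum_digits_succ hb (n + L)
    obtain ⟨P, hP⟩ : ∃ P, (b - 1) * vvTM b (n + L + 1) = P := ⟨_, rfl⟩
    rw [hP] at h ⊢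
    omega

/-- in the square case (`2 ≤ b ≤ m`), if a square `w²` with
`|w| = ℓ`, `b ∤ ℓ`, occurs at position `i`, then `b ∣ (i + ℓ)`: the second half of
the square begins at the beginning of a block. -/
theorem genTM_square_second_half_block (b m i ℓ : ℕ) (hb : 2 ≤ b) (hbm : b ≤ m)
    (hℓ : 1 ≤ ℓ) (hnd : ¬ b ∣ ℓ)
    (hsq : ∀ j : ℕ, j < ℓ → genTM b m (i + j) = genTM b m (i + j + ℓ)) :
    b ∣ (i + ℓ) := by
  by_contra hnd2
  have hm2 : 2 ≤ m := le_trans hb hbm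
  -- one-step relation in `ZMod m`
  have hd : ∀ n : ℕ, genTM b m (n + 1) + (((b - 1) * vvTM b (n + 1) : ℕ) : ZMod m)
      = genTM b m n + 1 := by
    intro n
    have h := congrArg (fun t : ℕ => (t : ZMod m)) (sum_digits_succ hb n)
    simp only [Nat.cast_add, Nat.cast_one] at h
    simpa [genTM] using h
  -- every multiple of b in (i, i+2ℓ) different from i+ℓ gives zero mod m
  have hC : ∀ x : ℕ, i < x → x < i + 2 * ℓ → x ≠ i + ℓ → b ∣ x →
      (((b - 1) * vvTM b x : ℕ) : ZMod m) = 0 := by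
    intro x hx1 hx2 hx3 hdvd
    rcases lt_or_gt_of_ne hx3 with hlt | hgt
    · obtain ⟨j, rfl⟩ : ∃ j, x = i + j + 1 := ⟨x - i - 1, by omega⟩
      have hj1 : j + 1 < ℓ := by omega
      have hv : vvTM b (i + j + ℓ + 1) = 0 := by
        apply vvTM_of_not_dvd
        intro hc
        have hd2 := Nat.dvd_sub hc hdvd
        rw [show i + j + ℓ + 1 - (i + j + 1) = ℓ from by omega] at hd2
        exact hnd hd2
      have e1 := hd (i + j)
      have e2 := hd (i + j + ℓ)
      rw [hv, Nat.mul_zero, Nat.cast_zero, add_zero] at e2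
      have h1 := hsq j (by omega)
      have h2 := hsq (j + 1) hj1
      rw [show i + (j + 1) = i + j + 1 from by ring, show i + j + 1 + ℓ = i + j + ℓ + 1 from by ring] at h2
      linear_combination e1 - e2 + h1 - h2
    · obtain ⟨j, rfl⟩ : ∃ j, x = i + j + ℓ + 1 := ⟨x - i - ℓ - 1, by omega⟩
      have hj1 : j + 1 < ℓ := by omega
      have hv : vvTM b (i + j + 1) = 0 := by
        apply vvTM_of_not_dvd
        intro hc
        have hd2 := Nat.dvd_sub hdvd hc
        rw [show i + j + ℓ + 1 - (i + j + 1) = ℓ from by omega] at hd2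
        exact hnd hd2
      have e1 := hd (i + j)
      have e2 := hd (i + j + ℓ)
      rw [hv, Nat.mul_zero, Nat.cast_zero, add_zero] at e1
      have h1 := hsq j (by omega)
      have h2 := hsq (j + 1) hj1
      rw [show i + (j + 1) = i + j + 1 from by ring, show i + j + 1 + ℓ = i + j + ℓ + 1 from by ring] at h2
      linear_combination e2 - e1 + h2 - h1
  -- telescoping at the first half: m ∣ ℓ
  have htel := sum_digits_tel hb i ℓ
  have htelm := congrArg (fun t : ℕ => (t : ZMod m)) htel
  simp only [Nat.cast_add, Nat.cast_sum] at htelm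
  have hzero : ∀ j ∈ Finset.range ℓ, (((b - 1) * vvTM b (i + j + 1) : ℕ) : ZMod m) = 0 := by
    intro j hj
    rw [Finset.mem_range] at hj
    by_cases hdvd : b ∣ (i + j + 1)
    · exact hC _ (by omega) (by omega) (fun h => hnd2 (h ▸ hdvd)) hdvd
    · rw [vvTM_of_not_dvd hdvd, Nat.mul_zero, Nat.cast_zero]
  rw [Finset.sum_eq_zero hzero] at htelm
  have h0 := hsq 0 hℓ
  simp only [Nat.add_zero, genTM] at h0
  have hℓ0 : (ℓ : ZMod m) = 0 := by linear_combination -htelm - h0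
  have hmℓ : m ∣ ℓ := (ZMod.natCast_eq_zero_iff ℓ m).mp hℓ0
  have hbltm : b < m := lt_of_le_of_ne hbm (by rintro rfl; exact hnd hmℓ)
  have hℓb : b + 1 ≤ ℓ := by
    have := Nat.le_of_dvd (by omega) hmℓ
    omega
  -- every multiple of b strictly between i and i+2ℓ is a multiple of b²
  have key2 : ∀ x : ℕ, i < x → x < i + 2 * ℓ → b ∣ x → b * b ∣ x := by
    intro x hx1 hx2 hdvd
    have hne : x ≠ i + ℓ := fun h => hnd2 (h ▸ hdvd)
    have h0' := hC x hx1 hx2 hne hdvd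
    have hmd : m ∣ (b - 1) * vvTM b x := (ZMod.natCast_eq_zero_iff _ m).mp h0'
    have hv1 : 1 ≤ vvTM b x := one_le_vvTM hb hdvd (by omega)
    have hv2 : 2 ≤ vvTM b x := by
      by_contra hc
      have hv1' : vvTM b x = 1 := by omega
      rw [hv1', Nat.mul_one] at hmd
      have := Nat.le_of_dvd (by omega) hmd
      omega
    exact sq_dvd_of_two_le_vvTM hv2
  -- the two consecutive multiples of b just above i
  have h1 := Nat.div_add_mod i b
  have h2 : i % b < b := Nat.mod_lt _ (by omega)
  have h3 : b * (i / b + 1) = b * (i / b) + b := by ring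
  obtain ⟨A, hA⟩ : ∃ A, b * (i / b) = A := ⟨_, rfl⟩
  rw [hA] at h1
  have hx0a : i < b * (i / b + 1) := by rw [h3, hA]; omega
  have hx0b : b * (i / b + 1) ≤ i + b := by rw [h3, hA]; omega
  have d1 := key2 (b * (i / b + 1)) hx0a (by omega) ⟨i / b + 1, rfl⟩
  have d2 := key2 (b * (i / b + 1) + b) (by omega) (by omega) ⟨i / b + 2, by ring⟩
  have d3 : b * b ∣ b := by
    have h5 := Nat.dvd_sub d2 d1
    rwa [Nat.add_sub_cancel_left] at h5
  have h6 := Nat.le_of_dvd (by omega) d3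
  have h7 : 2 * b ≤ b * b := Nat.mul_le_mul_right b hb
  omega
end
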